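/- Let n ≥ 2 and let K ⊆ J ⊆ [n-1] and K' ⊆ J' ⊆ [n-1]. Then F_{K,J} ⊆ F_{K',J'} if and only if K' ⊆ K and J ⊆ J'; moreover F_{K,J} = F_{K',J'} if and only if K = K' and J = J'. -/

import Mathlib

/-!
For `i ∈ [n-1]` the functional `⟨-α_i^∨, x⟩ = x_{i-1} - 2 x_i + x_{i+1}` separates the vertices:
if `i ∈ L` and `[a, b]` is the maximal interval of `L` containing `i`, then on `[a-1, b+1]` the
coordinates of `v_L` are the values at `k` of the quadratic `(k - a + 1)(b + 1 - k)`, which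
vanishes at `a - 1` and `b + 1` and has second difference `-2`; if `i ∉ L`, then `v_L` vanishes
at `i` and is nonnegative, so the functional is `≥ 0`. Hence `F_i^+` lies in the hyperplane
`⟨-α_i^∨, x⟩ = -2` and `F_i^-` in the half-space `⟨-α_i^∨, x⟩ ≥ 0`, so `v_L ∈ F_{K,J}` iff
`K ⊆ L ⊆ J`. Testing an inclusion `F_{K,J} ⊆ F_{K',J'}` on the vertices `v_K` and `v_J` gives
`K' ⊆ K` and `J ⊆ J'`; the converse is monotonicity of the definition.
-/

open Matrix

attribute [local instance] Classical.propDecidable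

noncomputable section

namespace PetersonPaper

/-- The natural number `c` (0-based; encoding the 1-based element `c+1`) belongs to
`J ⊆ [n-1]`. -/
def memJ (n : ℕ) (J : Set (Fin (n-1))) (c : ℕ) : Prop :=
  ∃ h : c < n - 1, (⟨c, h⟩ : Fin (n-1)) ∈ J

/-- The (0-based) first element of the maximal interval of consecutive integers of
`J` containing `i ∈ J`. -/
def compStart (n : ℕ) (J : Set (Fin (n-1))) (i : Fin (n-1)) : ℕ :=
  sInf {a : ℕ | a ≤ i.1 ∧ ∀ c : ℕ, a ≤ c → c ≤ i.1 → memJ n J c}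

/-- The (0-based) last element of the maximal interval of consecutive integers of
`J` containing `i ∈ J`. -/
def compEnd (n : ℕ) (J : Set (Fin (n-1))) (i : Fin (n-1)) : ℕ :=
  sSup {b : ℕ | b < n - 1 ∧ i.1 ≤ b ∧ ∀ c : ℕ, i.1 ≤ c → c ≤ b → memJ n J c}

/-- The vertex `v_J ∈ ℝ^{n-1}`: its `i`-th coordinate is `(i+1-a)(b+1-i)` (1-based)
if `i ∈ J` with `[a,b]` the maximal interval of `J` containing `i`, and `0`
otherwise. -/
def vJ (n : ℕ) (J : Set (Fin (n-1))) : Fin (n-1) → ℝ :=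
  fun i => if i ∈ J then
    (((i.1 + 1 - compStart n J i) * (compEnd n J i + 1 - i.1) : ℕ) : ℝ) else 0

/-- The standard inner product on `ℝ^{n-1}`. -/
def dotR (n : ℕ) (a b : Fin (n-1) → ℝ) : ℝ := ∑ i, a i * b i

/-- The standard basis vector `e_i` of `ℝ^{n-1}`. -/
def stdE (n : ℕ) (i : Fin (n-1)) : Fin (n-1) → ℝ := fun j => if j = i then 1 else 0

/-- `-α^∨_i = e_{i-1} - 2 e_i + e_{i+1}` with the convention `e_0 = e_n = 0`
(1-based; `i : Fin (n-1)` encodes `i.1+1`). -/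
def negAlphaV (n : ℕ) (i : Fin (n-1)) : Fin (n-1) → ℝ :=
  fun j => (if j.1 + 1 = i.1 then 1 else 0) - 2 * (if j = i then 1 else 0)
    + (if j.1 = i.1 + 1 then 1 else 0)

/-- The face `F_i^+ = conv{v_J : i ∈ J}`. -/
def Fplus (n : ℕ) (i : Fin (n-1)) : Set (Fin (n-1) → ℝ) :=
  convexHull ℝ { v | ∃ J : Set (Fin (n-1)), i ∈ J ∧ v = vJ n J }

/-- The face `F_i^- = conv{v_J : i ∉ J}`. -/
def Fminus (n : ℕ) (i : Fin (n-1)) : Set (Fin (n-1) → ℝ) :=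
  convexHull ℝ { v | ∃ J : Set (Fin (n-1)), i ∉ J ∧ v = vJ n J }

/-- The polytope `P_{n-1} = conv{v_J : J ⊆ [n-1]}`. -/
def Ppoly (n : ℕ) : Set (Fin (n-1) → ℝ) :=
  convexHull ℝ { v | ∃ J : Set (Fin (n-1)), v = vJ n J }

/-- The face `F_{K,J} = (⋂_{i ∈ K} F_i^+) ∩ (⋂_{i ∉ J} F_i^-)` of `P_{n-1}`
(intersecting with `P_{n-1}` itself, which encodes the convention
`F_{∅,[n-1]} = P_{n-1}` and is harmless otherwise, all faces being subsets of
`P_{n-1}`). -/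
def FKJ (n : ℕ) (K J : Set (Fin (n-1))) : Set (Fin (n-1) → ℝ) :=
  Ppoly n ∩ (⋂ i ∈ K, Fplus n i) ∩ (⋂ i ∈ (Jᶜ : Set (Fin (n-1))), Fminus n i)

section Components

variable {n : ℕ} {L : Set (Fin (n-1))} {i j : Fin (n-1)}

lemma compStart_le_iff (hi : i ∈ L) {a : ℕ} (ha : a ≤ i.1) :
    compStart n L i ≤ a ↔ ∀ c, a ≤ c → c ≤ i.1 → memJ n L c := by
  refine ⟨fun h c hac hci => ?_, fun h => Nat.sInf_le ⟨ha, h⟩⟩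
  have hne : {a : ℕ | a ≤ i.1 ∧ ∀ c : ℕ, a ≤ c → c ≤ i.1 → memJ n L c}.Nonempty :=
    ⟨i.1, le_rfl, fun c h1 h2 => by obtain rfl := le_antisymm h2 h1; exact ⟨i.2, hi⟩⟩
  exact (Nat.sInf_mem hne).2 c (h.trans hac) hci

lemma le_compEnd_iff (hi : i ∈ L) {b : ℕ} (hb : i.1 ≤ b) :
    b ≤ compEnd n L i ↔ b < n - 1 ∧ ∀ c, i.1 ≤ c → c ≤ b → memJ n L c := by
  have hbdd : BddAbove
      {b : ℕ | b < n - 1 ∧ i.1 ≤ b ∧ ∀ c : ℕ, i.1 ≤ c → c ≤ b → memJ n L c} :=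
    ⟨n - 1, fun _ hx => hx.1.le⟩
  refine ⟨fun h => ?_, fun h => le_csSup hbdd ⟨h.1, hb, h.2⟩⟩
  have hne : {b : ℕ | b < n - 1 ∧ i.1 ≤ b ∧ ∀ c : ℕ, i.1 ≤ c → c ≤ b → memJ n L c}.Nonempty :=
    ⟨i.1, i.2, le_rfl, fun c h1 h2 => by obtain rfl := le_antisymm h2 h1; exact ⟨i.2, hi⟩⟩
  obtain ⟨hlt, -, hmem⟩ := Nat.sSup_mem hne hbdd
  exact ⟨h.trans_lt hlt, fun c h1 h2 => hmem c h1 (h2.trans h)⟩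

lemma compStart_le_self (hi : i ∈ L) : compStart n L i ≤ i.1 :=
  (compStart_le_iff hi le_rfl).2 fun c h1 h2 => by obtain rfl := le_antisymm h2 h1; exact ⟨i.2, hi⟩

lemma le_compEnd_self (hi : i ∈ L) : i.1 ≤ compEnd n L i :=
  (le_compEnd_iff hi le_rfl).2
    ⟨i.2, fun c h1 h2 => by obtain rfl := le_antisymm h2 h1; exact ⟨i.2, hi⟩⟩

lemma compEnd_lt (hi : i ∈ L) : compEnd n L i < n - 1 :=
  ((le_compEnd_iff hi (le_compEnd_self hi)).1 le_rfl).1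

lemma memJ_of_compStart_le_of_le_compEnd (hi : i ∈ L) {c : ℕ}
    (h1 : compStart n L i ≤ c) (h2 : c ≤ compEnd n L i) : memJ n L c := by
  rcases le_total c i.1 with hc | hc
  · exact (compStart_le_iff hi (compStart_le_self hi)).1 le_rfl c h1 hc
  · exact ((le_compEnd_iff hi (le_compEnd_self hi)).1 le_rfl).2 c hc h2

lemma not_memJ_compStart_sub_one (hi : i ∈ L) (h0 : 0 < compStart n L i) :
    ¬ memJ n L (compStart n L i - 1) := by
  intro hmem
  have : compStart n L i ≤ compStart n L i - 1 := by
    refine (compStart_le_iff hi (by have := compStart_le_self hi; omega)).2 fun c h1 h2 => ?_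
    rcases eq_or_lt_of_le h1 with rfl | hc
    · exact hmem
    · exact memJ_of_compStart_le_of_le_compEnd hi (by omega) (h2.trans (le_compEnd_self hi))
  omega

lemma not_memJ_compEnd_add_one (hi : i ∈ L) : ¬ memJ n L (compEnd n L i + 1) := by
  intro hmem
  have : compEnd n L i + 1 ≤ compEnd n L i := by
    refine (le_compEnd_iff hi (by have := le_compEnd_self hi; omega)).2 ⟨hmem.1, fun c h1 h2 => ?_⟩
    rcases eq_or_lt_of_le h2 with rfl | hc
    · exact hmem
    · exact memJ_of_compStart_le_of_le_compEnd hi ((compStart_le_self hi).trans h1) (by omega)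
  omega

lemma compStart_eq_and_compEnd_eq (hi : i ∈ L) (h1 : compStart n L i ≤ j.1)
    (h2 : j.1 ≤ compEnd n L i) :
    j ∈ L ∧ compStart n L j = compStart n L i ∧ compEnd n L j = compEnd n L i := by
  have widen : ∀ {i j : Fin (n-1)}, i ∈ L → compStart n L i ≤ j.1 → j.1 ≤ compEnd n L i →
      j ∈ L ∧ compStart n L j ≤ compStart n L i ∧ compEnd n L i ≤ compEnd n L j := by
    intro i j hi h1 h2
    have hj : j ∈ L := (memJ_of_compStart_le_of_le_compEnd hi h1 h2).2
    refine ⟨hj, (compStart_le_iff hj h1).2 fun c hc1 hc2 => ?_,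
      (le_compEnd_iff hj h2).2 ⟨compEnd_lt hi, fun c hc1 hc2 => ?_⟩⟩
    · exact memJ_of_compStart_le_of_le_compEnd hi hc1 (hc2.trans h2)
    · exact memJ_of_compStart_le_of_le_compEnd hi (h1.trans hc1) hc2
  obtain ⟨hj, hs, he⟩ := widen hi h1 h2
  obtain ⟨-, hs', he'⟩ := widen hj (hs.trans (compStart_le_self hi))
    ((le_compEnd_self hi).trans he)
  exact ⟨hj, le_antisymm hs hs', le_antisymm he' he⟩

end Components

section SecondDifference

variable {n : ℕ}

/-- The coordinates of `v` with the paper's 1-based indexing, extended by `e_0 = e_n = 0`. -/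
def extendByZero (v : Fin (n-1) → ℝ) (k : ℕ) : ℝ :=
  if h : 0 < k ∧ k - 1 < n - 1 then v ⟨k - 1, h.2⟩ else 0

lemma extendByZero_succ (v : Fin (n-1) → ℝ) (i : Fin (n-1)) :
    extendByZero v (i.1 + 1) = v i := by
  simp [extendByZero, i.2]

lemma extendByZero_nonneg {v : Fin (n-1) → ℝ} (hv : 0 ≤ v) (k : ℕ) :
    0 ≤ extendByZero v k := by
  unfold extendByZero
  split
  · exact hv _
  · exact le_rfl

lemma sum_ite_succ_eq (v : Fin (n-1) → ℝ) (k : ℕ) :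
    ∑ j : Fin (n-1), (if j.1 + 1 = k then v j else 0) = extendByZero v k := by
  unfold extendByZero
  split_ifs with h
  · rw [Fintype.sum_eq_single ⟨k - 1, h.2⟩
      fun j hj => if_neg fun hk => hj (Fin.ext (show j.1 = k - 1 by omega))]
    exact if_pos (Nat.sub_add_cancel h.1)
  · exact Finset.sum_eq_zero fun j _ => if_neg fun hk => by have := j.2; omega

lemma dotR_negAlphaV (i : Fin (n-1)) (v : Fin (n-1) → ℝ) :
    dotR n (negAlphaV n i) v = extendByZero v i.1 - 2 * v i + extendByZero v (i.1 + 2) := by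
  have hterm : ∀ j : Fin (n-1), negAlphaV n i j * v j =
      (if j.1 + 1 = i.1 then v j else 0) - 2 * (if j.1 + 1 = i.1 + 1 then v j else 0)
        + (if j.1 + 1 = i.1 + 2 then v j else 0) := by
    intro j
    simp only [negAlphaV, Fin.ext_iff, Nat.add_right_cancel_iff,
      show j.1 + 1 = i.1 + 2 ↔ j.1 = i.1 + 1 by omega]
    split_ifs <;> ring
  simp only [dotR, hterm, Finset.sum_add_distrib, Finset.sum_sub_distrib, ← Finset.mul_sum,
    sum_ite_succ_eq, extendByZero_succ]

end SecondDifference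

section Vertices

variable {n : ℕ} {L : Set (Fin (n-1))} {i : Fin (n-1)}

lemma vJ_nonneg (L : Set (Fin (n-1))) : 0 ≤ vJ n L := by
  intro i
  unfold vJ
  split
  · positivity
  · exact le_rfl

lemma extendByZero_vJ_compStart (hi : i ∈ L) : extendByZero (vJ n L) (compStart n L i) = 0 := by
  unfold extendByZero
  split_ifs with h
  · exact if_neg fun hmem => not_memJ_compStart_sub_one hi h.1 ⟨h.2, hmem⟩
  · rfl

lemma extendByZero_vJ_compEnd_add_two (hi : i ∈ L) :
    extendByZero (vJ n L) (compEnd n L i + 2) = 0 := by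
  unfold extendByZero
  split_ifs with h
  · exact if_neg fun hmem => not_memJ_compEnd_add_one hi ⟨h.2, hmem⟩
  · rfl

lemma extendByZero_vJ_eq (hi : i ∈ L) {k : ℕ} (h1 : compStart n L i ≤ k)
    (h2 : k ≤ compEnd n L i + 2) :
    extendByZero (vJ n L) k =
      ((k : ℝ) - compStart n L i) * (compEnd n L i + 2 - k) := by
  rcases eq_or_lt_of_le h1 with rfl | h1
  · simp [extendByZero_vJ_compStart hi]
  rcases eq_or_lt_of_le h2 with rfl | h2
  · simp [extendByZero_vJ_compEnd_add_two hi]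
  have hk : k - 1 < n - 1 := by have := compEnd_lt hi; omega
  obtain ⟨hj, hs, he⟩ := compStart_eq_and_compEnd_eq (j := ⟨k - 1, hk⟩) hi
    (show _ ≤ k - 1 by omega) (show k - 1 ≤ _ by omega)
  have hvj : vJ n L ⟨k - 1, hk⟩ =
      (((k - 1 + 1 - compStart n L i) * (compEnd n L i + 1 - (k - 1)) : ℕ) : ℝ) := by
    rw [← hs, ← he]
    exact if_pos hj
  rw [extendByZero, dif_pos ⟨by omega, hk⟩, hvj]
  push_cast [show compStart n L i ≤ k - 1 + 1 by omega, show k - 1 ≤ compEnd n L i + 1 by omega,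
    show 1 ≤ k by omega]
  ring

lemma dotR_negAlphaV_vJ_of_mem (hi : i ∈ L) : dotR n (negAlphaV n i) (vJ n L) = -2 := by
  have hs := compStart_le_self hi
  have he := le_compEnd_self hi
  rw [dotR_negAlphaV, ← extendByZero_succ (vJ n L) i, extendByZero_vJ_eq hi hs (by omega),
    extendByZero_vJ_eq hi (by omega) (by omega), extendByZero_vJ_eq hi (by omega) (by omega)]
  push_cast
  ring

lemma dotR_negAlphaV_vJ_nonneg_of_not_mem (hi : i ∉ L) :
    0 ≤ dotR n (negAlphaV n i) (vJ n L) := by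
  have hvi : vJ n L i = 0 := if_neg hi
  rw [dotR_negAlphaV, hvi]
  have := extendByZero_nonneg (vJ_nonneg L) i.1
  have := extendByZero_nonneg (vJ_nonneg L) (i.1 + 2)
  linarith

end Vertices

section Faces

variable {n : ℕ}

lemma isLinearMap_dotR (w : Fin (n-1) → ℝ) : IsLinearMap ℝ (dotR n w) :=
  ⟨dotProduct_add w, fun c x => dotProduct_smul c w x⟩

lemma Fplus_subset (i : Fin (n-1)) : Fplus n i ⊆ {x | dotR n (negAlphaV n i) x = -2} :=
  convexHull_min (by rintro _ ⟨L, hi, rfl⟩; exact dotR_negAlphaV_vJ_of_mem hi)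
    (convex_hyperplane (isLinearMap_dotR _) _)

lemma Fminus_subset (i : Fin (n-1)) : Fminus n i ⊆ {x | 0 ≤ dotR n (negAlphaV n i) x} :=
  convexHull_min (by rintro _ ⟨L, hi, rfl⟩; exact dotR_negAlphaV_vJ_nonneg_of_not_mem hi)
    (convex_halfSpace_ge (isLinearMap_dotR _) _)

lemma vJ_mem_FKJ_iff {K J L : Set (Fin (n-1))} : vJ n L ∈ FKJ n K J ↔ K ⊆ L ∧ L ⊆ J := by
  simp only [FKJ, Set.mem_inter_iff, Set.mem_iInter₂]
  constructor
  · rintro ⟨⟨-, hK⟩, hJ⟩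
    refine ⟨fun i hiK => ?_, fun i hiL => ?_⟩
    · by_contra hiL
      have h1 : dotR n (negAlphaV n i) (vJ n L) = -2 := Fplus_subset i (hK i hiK)
      have h2 := dotR_negAlphaV_vJ_nonneg_of_not_mem (n := n) hiL
      linarith
    · by_contra hiJ
      have h1 : 0 ≤ dotR n (negAlphaV n i) (vJ n L) := Fminus_subset i (hJ i hiJ)
      have h2 := dotR_negAlphaV_vJ_of_mem (n := n) hiL
      linarith
  · rintro ⟨hKL, hLJ⟩
    exact ⟨⟨subset_convexHull ℝ _ ⟨L, rfl⟩, fun i hi => subset_convexHull ℝ _ ⟨L, hKL hi, rfl⟩⟩,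
      fun i hi => subset_convexHull ℝ _ ⟨L, fun h => hi (hLJ h), rfl⟩⟩

lemma FKJ_mono {K J K' J' : Set (Fin (n-1))} (hK : K' ⊆ K) (hJ : J ⊆ J') :
    FKJ n K J ⊆ FKJ n K' J' := by
  unfold FKJ
  exact Set.inter_subset_inter
    (Set.inter_subset_inter_right _ (Set.biInter_subset_biInter_left hK))
    (Set.biInter_subset_biInter_left (Set.compl_subset_compl.2 hJ))

lemma FKJ_subset_FKJ_iff {K J K' J' : Set (Fin (n-1))} (hKJ : K ⊆ J) :
    FKJ n K J ⊆ FKJ n K' J' ↔ K' ⊆ K ∧ J ⊆ J' := by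
  refine ⟨fun h => ?_, fun h => FKJ_mono h.1 h.2⟩
  exact ⟨(vJ_mem_FKJ_iff.1 (h (vJ_mem_FKJ_iff.2 ⟨le_rfl, hKJ⟩))).1,
    (vJ_mem_FKJ_iff.1 (h (vJ_mem_FKJ_iff.2 ⟨hKJ, le_rfl⟩))).2⟩

end Faces

theorem face_inclusion_iff (n : ℕ) (K J K' J' : Set (Fin (n-1)))
    (hKJ : K ⊆ J) (hKJ' : K' ⊆ J') :
    (FKJ n K J ⊆ FKJ n K' J' ↔ (K' ⊆ K ∧ J ⊆ J')) ∧
    (FKJ n K J = FKJ n K' J' ↔ (K = K' ∧ J = J')) := by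
  refine ⟨FKJ_subset_FKJ_iff hKJ, ?_⟩
  rw [subset_antisymm_iff, FKJ_subset_FKJ_iff hKJ, FKJ_subset_FKJ_iff hKJ']
  constructor
  · rintro ⟨⟨hK, hJ⟩, hK', hJ'⟩
    exact ⟨hK'.antisymm hK, hJ.antisymm hJ'⟩
  · rintro ⟨rfl, rfl⟩
    exact ⟨⟨le_rfl, le_rfl⟩, le_rfl, le_rfl⟩

end PetersonPaper
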